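/- Let f : ℂ^N → ℝ be differentiable (over ℝ) with L-Lipschitz gradient ∇f for some L > 0, let h : ℂ^N → ℝ be convex and differentiable, and set F = h + f. Let C ⊆ ℂ^N be a nonempty closed convex set with F* := inf_{x ∈ C} F(x) finite. Let B ∈ ℂ^{N×N} be Hermitian with η·I_N ⪯ B ⪯ η̄·I_N for some 0 < η < η̄, and let ν > 0. Suppose α satisfies 0 < α ≤ min{η̄/ν, η/L}, and suppose the proximal Polyak–Łojasiewicz inequality D_h^C(z, ∇f(z), I_N, α/η̄) ≥ 2ν·(F(z) − F*) holds for all z ∈ C. Fix x ∈ C and let x⁺ ∈ C be a minimizer over C of x̄ ↦ S_h(x̄, x, ∇f(x), B, α). Then F(x⁺) − F* ≤ (1 − ν·α/η̄)·(F(x) − F*). -/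

import Mathlib

open scoped ComplexOrder

noncomputable section

/-- `ℂ^N` with the standard complex inner product (conjugate-linear in the
first argument) and the induced norm. -/
abbrev EC (N : ℕ) := EuclideanSpace ℂ (Fin N)

/-- Weighted squared norm `‖z‖_W² = zᴴ W z` (its real part, which is the full
value when `W` is Hermitian). -/
def wnorm2 {N : ℕ} (W : Matrix (Fin N) (Fin N) ℂ) (z : EC N) : ℝ :=
  (dotProduct (fun i => starRingEnd ℂ (z i)) (W.mulVec (fun i => z i))).re

/-- Surrogate `S_h(x̄, x, g, W, α) = Re⟨g, x̄ − x⟩ + (1/(2α))‖x̄ − x‖_W² + h(x̄) − h(x)`. -/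
def Sh {N : ℕ} (h : EC N → ℝ) (W : Matrix (Fin N) (Fin N) ℂ) (α : ℝ)
    (g x xb : EC N) : ℝ :=
  (inner ℂ g (xb - x) : ℂ).re + (1 / (2 * α)) * wnorm2 W (xb - x) + h xb - h x

/-- `D_h^C(x, g, W, α) = −(2/α)·inf_{x̄ ∈ C} S_h(x̄, x, g, W, α)`. -/
def Dh {N : ℕ} (h : EC N → ℝ) (C : Set (EC N)) (W : Matrix (Fin N) (Fin N) ℂ)
    (α : ℝ) (g x : EC N) : ℝ :=
  -(2 / α) * sInf ((fun xb => Sh h W α g x xb) '' C)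

/-- The real-linear continuous functional `d ↦ Re⟨g, d⟩`, used to say that a
real-differentiable `f : ℂ^N → ℝ` has gradient `g` at a point. -/
def gradDual {N : ℕ} (g : EC N) : EC N →L[ℝ] ℝ :=
  Complex.reCLM.comp ((innerSL ℂ g).restrictScalars ℝ)

/-- The rank-one matrix `u·uᴴ` with entries `uᵢ · conj(uⱼ)`. -/
def rankOne {N : ℕ} (u : EC N) : Matrix (Fin N) (Fin N) ℂ :=
  Matrix.vecMulVec (fun i => u i) (fun i => starRingEnd ℂ (u i))

end

/-!
The descent lemma for the `L`-smooth part gives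
`F(x⁺) − F(x) ≤ S_h(x⁺, x, ∇f(x), B, α)` as soon as `α L ≤ η ≤ B`.
Since `B ≤ η̄`, the surrogate with weight `B` and step `α` lies below the one
with weight `I` and step `α/η̄`, so its minimum over `C` is at most the infimum
appearing in `D_h^C(x, ∇f(x), I, α/η̄)`, which the proximal PL inequality
bounds by `−(να/η̄)(F(x) − F*)`.
-/

section WeightedNorm

variable {N : ℕ}

lemma wnorm2_one (z : EC N) : wnorm2 1 z = ‖z‖ ^ 2 := by
  rw [← inner_self_eq_norm_sq (𝕜 := ℂ), RCLike.re_to_complex]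
  simp only [wnorm2, Matrix.one_mulVec, dotProduct, PiLp.inner_apply, RCLike.inner_apply,
    mul_comm]

lemma wnorm2_smul (r : ℝ) (W : Matrix (Fin N) (Fin N) ℂ) (z : EC N) :
    wnorm2 (r • W) z = r * wnorm2 W z := by
  simp only [wnorm2, Matrix.smul_mulVec, dotProduct_smul, Complex.real_smul,
    Complex.re_ofReal_mul]

lemma wnorm2_sub (A B : Matrix (Fin N) (Fin N) ℂ) (z : EC N) :
    wnorm2 (A - B) z = wnorm2 A z - wnorm2 B z := by
  simp only [wnorm2, Matrix.sub_mulVec, dotProduct_sub, Complex.sub_re]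

lemma wnorm2_le_of_posSemidef_sub {A B : Matrix (Fin N) (Fin N) ℂ} (hAB : (B - A).PosSemidef)
    (z : EC N) : wnorm2 A z ≤ wnorm2 B z := by
  have := hAB.re_dotProduct_nonneg (fun i => z i)
  rw [← sub_nonneg, ← wnorm2_sub]
  simpa [wnorm2, RCLike.re_to_complex, dotProduct] using this

lemma mul_norm_sq_le_wnorm2 {η : ℝ} {B : Matrix (Fin N) (Fin N) ℂ}
    (hB : (B - η • (1 : Matrix (Fin N) (Fin N) ℂ)).PosSemidef) (z : EC N) :
    η * ‖z‖ ^ 2 ≤ wnorm2 B z := by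
  simpa only [wnorm2_smul, wnorm2_one] using wnorm2_le_of_posSemidef_sub hB z

lemma wnorm2_le_mul_norm_sq {ηb : ℝ} {B : Matrix (Fin N) (Fin N) ℂ}
    (hB : (ηb • (1 : Matrix (Fin N) (Fin N) ℂ) - B).PosSemidef) (z : EC N) :
    wnorm2 B z ≤ ηb * ‖z‖ ^ 2 := by
  simpa only [wnorm2_smul, wnorm2_one] using wnorm2_le_of_posSemidef_sub hB z

end WeightedNorm

section Descent

variable {N : ℕ} {f : EC N → ℝ} {gradf : EC N → EC N} {L : ℝ}

lemma hasDerivAt_comp_add_smul (hfdiff : ∀ z, HasFDerivAt f (gradDual (gradf z)) z)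
    (x v : EC N) (t : ℝ) :
    HasDerivAt (fun s : ℝ => f (x + s • v)) (inner ℂ (gradf (x + t • v)) v).re t := by
  have hline : HasDerivAt (fun s : ℝ => x + s • v) v t := by
    simpa using ((hasDerivAt_id t).smul_const v).const_add x
  have := (hfdiff (x + t • v)).comp_hasDerivAt t hline
  simp only [gradDual, ContinuousLinearMap.coe_comp, Function.comp_apply] at this
  exact this

lemma re_inner_sub_le_of_lipschitz
    (hlip : ∀ z₁ z₂ : EC N, ‖gradf z₁ - gradf z₂‖ ≤ L * ‖z₁ - z₂‖)
    (x v : EC N) {t : ℝ} (ht : 0 ≤ t) :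
    (inner ℂ (gradf (x + t • v)) v).re - (inner ℂ (gradf x) v).re ≤ L * ‖v‖ ^ 2 * t := by
  rw [← Complex.sub_re, ← inner_sub_left]
  calc (inner ℂ (gradf (x + t • v) - gradf x) v).re
      ≤ ‖gradf (x + t • v) - gradf x‖ * ‖v‖ := by
        simpa only [RCLike.re_to_complex] using re_inner_le_norm (𝕜 := ℂ) _ _
    _ ≤ L * (t * ‖v‖) * ‖v‖ := by
      gcongr
      simpa [norm_smul, abs_of_nonneg ht] using hlip (x + t • v) x
    _ = L * ‖v‖ ^ 2 * t := by ring

theorem le_add_re_inner_add_of_lipschitz (hfdiff : ∀ z, HasFDerivAt f (gradDual (gradf z)) z)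
    (hlip : ∀ z₁ z₂ : EC N, ‖gradf z₁ - gradf z₂‖ ≤ L * ‖z₁ - z₂‖) (x y : EC N) :
    f y ≤ f x + (inner ℂ (gradf x) (y - x)).re + L / 2 * ‖y - x‖ ^ 2 := by
  set v := y - x
  set c := (inner ℂ (gradf x) v).re
  -- `ψ t = f (x + t v) − t c − (L/2) ‖v‖² t²` has nonpositive derivative for `t ≥ 0`.
  set ψ : ℝ → ℝ := fun t => f (x + t • v) - t * c - L / 2 * ‖v‖ ^ 2 * t ^ 2
  have hψ : ∀ t, HasDerivAt ψ ((inner ℂ (gradf (x + t • v)) v).re - c - L * ‖v‖ ^ 2 * t) t :=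
    fun t => (((hasDerivAt_comp_add_smul hfdiff x v t).sub ((hasDerivAt_id t).mul_const c)).sub
      ((hasDerivAt_pow 2 t).const_mul (L / 2 * ‖v‖ ^ 2))).congr_deriv (by ring)
  have hanti : AntitoneOn ψ (Set.Ici 0) := by
    refine antitoneOn_of_hasDerivWithinAt_nonpos (convex_Ici 0)
      (fun t _ => (hψ t).continuousAt.continuousWithinAt)
      (fun t _ => (hψ t).hasDerivWithinAt) fun t ht => ?_
    rw [interior_Ici] at ht
    linarith [re_inner_sub_le_of_lipschitz hlip x v (le_of_lt ht)]
  have h01 : ψ 1 ≤ ψ 0 := hanti (Set.mem_Ici.2 le_rfl) (Set.mem_Ici.2 zero_le_one) zero_le_one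
  simp only [ψ, v, one_smul, zero_smul, add_zero, add_sub_cancel, zero_mul, sub_zero] at h01
  linarith

end Descent

section Surrogate

variable {N : ℕ} (h : EC N → ℝ) (g x : EC N)

lemma Sh_le_Sh_one_div {ηb α : ℝ} (hα : 0 ≤ α) {B : Matrix (Fin N) (Fin N) ℂ}
    (hB : (ηb • (1 : Matrix (Fin N) (Fin N) ℂ) - B).PosSemidef) (xb : EC N) :
    Sh h B α g x xb ≤ Sh h 1 (α / ηb) g x xb := by
  have hw : 1 / (2 * α) * wnorm2 B (xb - x) ≤ 1 / (2 * (α / ηb)) * ‖xb - x‖ ^ 2 := by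
    calc 1 / (2 * α) * wnorm2 B (xb - x) ≤ 1 / (2 * α) * (ηb * ‖xb - x‖ ^ 2) := by
          gcongr
          exact wnorm2_le_mul_norm_sq hB _
      _ = 1 / (2 * (α / ηb)) * ‖xb - x‖ ^ 2 := by
          rw [mul_div, one_div_div, one_div]; ring
  simp only [Sh, wnorm2_one]
  linarith

lemma sInf_image_Sh_le_of_le_Dh (C : Set (EC N)) (W : Matrix (Fin N) (Fin N) ℂ) {a c : ℝ}
    (ha : 0 < a) (hD : c ≤ Dh h C W a g x) :
    sInf ((fun xb => Sh h W a g x xb) '' C) ≤ -(a / 2 * c) := by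
  unfold Dh at hD
  set s := sInf ((fun xb => Sh h W a g x xb) '' C)
  have hs : a / 2 * (-(2 / a) * s) = -s := by field_simp
  nlinarith

end Surrogate

theorem add_sub_le_Sh_of_lipschitz {N : ℕ} {f : EC N → ℝ} {gradf : EC N → EC N} {L : ℝ}
    (hfdiff : ∀ z, HasFDerivAt f (gradDual (gradf z)) z)
    (hlip : ∀ z₁ z₂ : EC N, ‖gradf z₁ - gradf z₂‖ ≤ L * ‖z₁ - z₂‖) (h : EC N → ℝ)
    {η α : ℝ} {B : Matrix (Fin N) (Fin N) ℂ}
    (hB : (B - η • (1 : Matrix (Fin N) (Fin N) ℂ)).PosSemidef) (hα : 0 < α) (hαL : α * L ≤ η)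
    (x y : EC N) :
    (h y + f y) - (h x + f x) ≤ Sh h B α (gradf x) x y := by
  have hquad : L / 2 * ‖y - x‖ ^ 2 ≤ 1 / (2 * α) * wnorm2 B (y - x) := by
    calc L / 2 * ‖y - x‖ ^ 2 = 1 / (2 * α) * ((α * L) * ‖y - x‖ ^ 2) := by field_simp
      _ ≤ 1 / (2 * α) * (η * ‖y - x‖ ^ 2) := by gcongr
      _ ≤ 1 / (2 * α) * wnorm2 B (y - x) := by gcongr; exact mul_norm_sq_le_wnorm2 hB _
  have := le_add_re_inner_add_of_lipschitz hfdiff hlip x y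
  simp only [Sh]
  linarith

theorem stmt15_general {N : ℕ} (f : EC N → ℝ) (gradf : EC N → EC N) (L : ℝ) (hL : 0 < L)
    (hfdiff : ∀ z : EC N, HasFDerivAt f (gradDual (gradf z)) z)
    (hlip : ∀ z₁ z₂ : EC N, ‖gradf z₁ - gradf z₂‖ ≤ L * ‖z₁ - z₂‖)
    (h : EC N → ℝ)
    (F : EC N → ℝ) (hF : F = fun z => h z + f z)
    (C : Set (EC N))
    (Fstar : ℝ)
    (η ηb : ℝ) (hη : 0 < η) (hηηb : η < ηb)
    (B : Matrix (Fin N) (Fin N) ℂ)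
    (hBlb : (B - η • (1 : Matrix (Fin N) (Fin N) ℂ)).PosSemidef)
    (hBub : (ηb • (1 : Matrix (Fin N) (Fin N) ℂ) - B).PosSemidef)
    (ν : ℝ)
    (α : ℝ) (hα : 0 < α) (hαle : α ≤ min (ηb / ν) (η / L))
    (hPL : ∀ z ∈ C, Dh h C 1 (α / ηb) (gradf z) z ≥ 2 * ν * (F z - Fstar))
    (x : EC N) (hx : x ∈ C) (xp : EC N)
    (hmin : IsMinOn (fun xb => Sh h B α (gradf x) x xb) C xp) :
    F xp - Fstar ≤ (1 - ν * α / ηb) * (F x - Fstar) := by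
  have hαL : α * L ≤ η := (le_div_iff₀ hL).1 (le_min_iff.1 hαle).2
  have hdecrease : F xp - F x ≤ Sh h B α (gradf x) x xp := by
    subst hF
    exact add_sub_le_Sh_of_lipschitz hfdiff hlip h hBlb hα hαL x xp
  have hsurrogate :
      Sh h B α (gradf x) x xp ≤ sInf ((fun xb => Sh h 1 (α / ηb) (gradf x) x xb) '' C) :=
    le_csInf ⟨_, x, hx, rfl⟩ fun _ ⟨xb, hxb, hval⟩ =>
      hval ▸ (hmin hxb).trans (Sh_le_Sh_one_div h (gradf x) x hα.le hBub xb)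
  have hPLx :=
    sInf_image_Sh_le_of_le_Dh h (gradf x) x C 1 (div_pos hα (hη.trans hηηb)) (hPL x hx)
  have hrate :
      -(α / ηb / 2 * (2 * ν * (F x - Fstar))) = -(ν * α / ηb) * (F x - Fstar) := by ring
  linarith

/-- Linear decrease under the proximal PL inequality.
With `f` real-differentiable with `L`-Lipschitz gradient, `h` convex
differentiable, `F = h + f`, `C` nonempty closed convex with finite infimum
`F*`, `B` Hermitian with `η·I ⪯ B ⪯ η̄·I` (`0 < η < η̄`), `ν > 0`,
`0 < α ≤ min{η̄/ν, η/L}`, and the proximal PL inequality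
`D_h^C(z, ∇f(z), I, α/η̄) ≥ 2ν(F(z) − F*)` for all `z ∈ C`: if `x ∈ C` and
`x⁺ ∈ C` minimizes `x̄ ↦ S_h(x̄, x, ∇f(x), B, α)` over `C`, then
`F(x⁺) − F* ≤ (1 − να/η̄)(F(x) − F*)`. -/
theorem stmt15 {N : ℕ} (f : EC N → ℝ) (gradf : EC N → EC N) (L : ℝ) (hL : 0 < L)
    (hfdiff : ∀ z : EC N, HasFDerivAt f (gradDual (gradf z)) z)
    (hlip : ∀ z₁ z₂ : EC N, ‖gradf z₁ - gradf z₂‖ ≤ L * ‖z₁ - z₂‖)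
    (h : EC N → ℝ) (hconv : ConvexOn ℝ Set.univ h) (hdiff : Differentiable ℝ h)
    (F : EC N → ℝ) (hF : F = fun z => h z + f z)
    (C : Set (EC N)) (hCne : C.Nonempty) (hCcl : IsClosed C) (hCcv : Convex ℝ C)
    (Fstar : ℝ) (hFstar : IsGLB (F '' C) Fstar)
    (η ηb : ℝ) (hη : 0 < η) (hηηb : η < ηb)
    (B : Matrix (Fin N) (Fin N) ℂ) (hBH : B.IsHermitian)
    (hBlb : (B - η • (1 : Matrix (Fin N) (Fin N) ℂ)).PosSemidef)
    (hBub : (ηb • (1 : Matrix (Fin N) (Fin N) ℂ) - B).PosSemidef)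
    (ν : ℝ) (hν : 0 < ν)
    (α : ℝ) (hα : 0 < α) (hαle : α ≤ min (ηb / ν) (η / L))
    (hPL : ∀ z ∈ C, Dh h C 1 (α / ηb) (gradf z) z ≥ 2 * ν * (F z - Fstar))
    (x : EC N) (hx : x ∈ C) (xp : EC N) (hxp : xp ∈ C)
    (hmin : IsMinOn (fun xb => Sh h B α (gradf x) x xb) C xp) :
    F xp - Fstar ≤ (1 - ν * α / ηb) * (F x - Fstar) :=
  stmt15_general f gradf L hL hfdiff hlip h F hF C Fstar η ηb hη hηηb B hBlb hBub ν α hα hαle hPL x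
    hx xp hmin
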